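/- arXiv:2403.04163 — 4 statements merged into one kernel-verified Lean document; each statement's English description precedes it below -/
import Mathlib

section
/- Let S = {s_1,…,s_l, t_1,…,t_r} be an independent generating set of an isotropic subspace of F_2^{2n}, and let m ∈ F_2^{2n} satisfy ⟨m, s_i⟩ = 1 for all 1 ≤ i ≤ l and ⟨m, t_j⟩ = 0 for all j, with l ≥ 1. Then the set S' = {m, s_2+s_1, s_3+s_1, …, s_l+s_1, t_1,…,t_r} is an independent set spanning an isotropic subspace of F_2^{2n} of the same dimension as span(S), and every element of S' other than m lies in span(S). -/
abbrev PauliVec (n : ℕ) := (Fin n → ZMod 2) × (Fin n → ZMod 2)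

def sympl {n : ℕ} (v w : PauliVec n) : ZMod 2 :=
  ∑ i, (v.1 i * w.2 i + v.2 i * w.1 i)

open Submodule

def symplL (n : ℕ) : PauliVec n →ₗ[ZMod 2] PauliVec n →ₗ[ZMod 2] ZMod 2 :=
  LinearMap.mk₂ (ZMod 2) sympl
    (fun x y z => by
      simp only [sympl, Prod.fst_add, Prod.snd_add, Pi.add_apply]
      rw [← Finset.sum_add_distrib]; exact Finset.sum_congr rfl fun i _ => by ring)
    (fun c x y => by
      simp only [sympl, Prod.smul_fst, Prod.smul_snd, Pi.smul_apply, smul_eq_mul,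
        Finset.mul_sum]
      exact Finset.sum_congr rfl fun i _ => by ring)
    (fun x y z => by
      simp only [sympl, Prod.fst_add, Prod.snd_add, Pi.add_apply]
      rw [← Finset.sum_add_distrib]; exact Finset.sum_congr rfl fun i _ => by ring)
    (fun c x y => by
      simp only [sympl, Prod.smul_fst, Prod.smul_snd, Pi.smul_apply, smul_eq_mul,
        Finset.mul_sum]
      exact Finset.sum_congr rfl fun i _ => by ring)

lemma symplL_apply {n : ℕ} (v w : PauliVec n) : symplL n v w = sympl v w := rfl

lemma sympl_self {n : ℕ} (v : PauliVec n) : sympl v v = 0 := by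
  have : ∀ a b : ZMod 2, a * b + b * a = 0 := by decide
  simp [sympl, this]

lemma sympl_comm {n : ℕ} (v w : PauliVec n) : sympl v w = sympl w v := by
  unfold sympl; exact Finset.sum_congr rfl fun i _ => by ring

lemma span_isotropic {n : ℕ} {s : Set (PauliVec n)}
    (h : ∀ x ∈ s, ∀ y ∈ s, sympl x y = 0) :
    ∀ x ∈ span (ZMod 2) s, ∀ y ∈ span (ZMod 2) s, sympl x y = 0 := by
  intro x hx y hy
  induction hx using span_induction with
  | mem a ha =>
    induction hy using span_induction with
    | mem b hb => exact h a ha b hb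
    | zero => rw [← symplL_apply]; simp
    | add b c _ _ hb hc =>
      rw [← symplL_apply] at hb hc ⊢; rw [map_add, hb, hc, add_zero]
    | smul c b _ hb =>
      rw [← symplL_apply] at hb ⊢; rw [map_smul, hb, smul_zero]
  | zero => rw [← symplL_apply]; simp
  | add a b _ _ ha hb =>
    rw [← symplL_apply] at ha hb ⊢
    rw [map_add, LinearMap.add_apply, ha, hb, add_zero]
  | smul c a _ ha =>
    rw [← symplL_apply] at ha ⊢
    rw [map_smul, LinearMap.smul_apply, ha, smul_zero]

/-- stabilizer update rule 2: given an independent generating set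
`{s₁,…,s_l, t₁,…,t_r}` of an isotropic subspace, and a measurement `m` that
anticommutes with every `sᵢ` and commutes with every `tⱼ` (`l ≥ 1`), the set
`{m, s₂+s₁, …, s_l+s₁, t₁,…,t_r}` is independent, spans an isotropic subspace of
the same dimension, and all its elements other than `m` lie in the original span. -/
theorem stabilizer_update_anticommute {n l r : ℕ} (hl : 0 < l)
    (s : Fin l → PauliVec n) (t : Fin r → PauliVec n)
    (hind : LinearIndependent (ZMod 2) (Sum.elim s t))
    (hiso : ∀ x ∈ span (ZMod 2) (Set.range (Sum.elim s t)),
            ∀ y ∈ span (ZMod 2) (Set.range (Sum.elim s t)), sympl x y = 0)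
    (m : PauliVec n)
    (hms : ∀ i, sympl m (s i) = 1) (hmt : ∀ j, sympl m (t j) = 0)
    (S' : Fin l ⊕ Fin r → PauliVec n)
    (hS' : S' = Sum.elim
      (fun i => if i = (⟨0, hl⟩ : Fin l) then m else s i + s ⟨0, hl⟩) t) :
    LinearIndependent (ZMod 2) S' ∧
    (∀ x ∈ span (ZMod 2) (Set.range S'),
      ∀ y ∈ span (ZMod 2) (Set.range S'), sympl x y = 0) ∧
    Module.finrank (ZMod 2) ↥(span (ZMod 2) (Set.range S')) =
      Module.finrank (ZMod 2) ↥(span (ZMod 2) (Set.range (Sum.elim s t))) ∧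
    (∀ x ∈ Set.range S', x ≠ m →
      x ∈ span (ZMod 2) (Set.range (Sum.elim s t))) := by
  set z : Fin l := ⟨0, hl⟩ with hz
  set V := span (ZMod 2) (Set.range (Sum.elim s t)) with hV
  have hsV : ∀ i, s i ∈ V := fun i => subset_span ⟨Sum.inl i, rfl⟩
  have htV : ∀ j, t j ∈ V := fun j => subset_span ⟨Sum.inr j, rfl⟩
  -- part 4
  have hmem : ∀ x ∈ Set.range S', x ≠ m → x ∈ V := by
    rintro x ⟨i, rfl⟩ hne
    cases i with
    | inl i =>
      rw [hS']
      by_cases hi : i = z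
      · exact absurd (by rw [hS', hi]; simp) hne
      · simp only [Sum.elim_inl, if_neg hi]
        exact add_mem (hsV i) (hsV z)
    | inr j => rw [hS']; exact htV j
  -- m not in V
  have hmV : m ∉ V := by
    intro h
    have := hiso m h (s z) (hsV z)
    rw [hms z] at this
    exact one_ne_zero this
  -- pairing with s z
  have hpair : ∀ i, sympl (S' i) (s z) = if i = Sum.inl z then 1 else 0 := by
    intro i
    cases i with
    | inl i =>
      by_cases hi : i = z
      · subst hi; rw [hS']; simp [hms z]
      · rw [hS']
        simp only [Sum.elim_inl, if_neg hi, Sum.inl.injEq]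
        rw [← symplL_apply, map_add, LinearMap.add_apply,
          symplL_apply, symplL_apply, hiso _ (hsV i) _ (hsV z), sympl_self,
          add_zero]
    | inr j =>
      rw [hS']
      simp only [Sum.elim_inr, reduceCtorEq, if_neg]
      exact hiso _ (htV j) _ (hsV z)
  -- independence
  have hindS' : LinearIndependent (ZMod 2) S' := by
    rw [Fintype.linearIndependent_iff]
    intro g hg
    have h0 : g (Sum.inl z) = 0 := by
      have h1 := congrArg (fun v => symplL n v (s z)) hg
      simp only [map_sum, LinearMap.sum_apply, map_smul, LinearMap.smul_apply,
        map_zero, LinearMap.zero_apply, symplL_apply] at h1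
      rw [Finset.sum_congr rfl (fun i _ => by rw [hpair i])] at h1
      simpa using h1
    set a : Fin l → ZMod 2 := fun i => g (Sum.inl i) with ha
    have haz : a z = 0 := h0
    set h : Fin l ⊕ Fin r → ZMod 2 :=
      Sum.elim (fun i => if i = z then ∑ i', a i' else a i)
        (fun j => g (Sum.inr j)) with hh
    have hsum : ∑ i, h i • Sum.elim s t i = 0 := by
      rw [Fintype.sum_sum_type] at hg ⊢
      simp only [hh, Sum.elim_inl, Sum.elim_inr] at *
      have key : ∑ i, (if i = z then ∑ i', a i' else a i) • s i
          = ∑ i, a i • S' (Sum.inl i) := by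
        rw [← Finset.add_sum_erase _ _ (Finset.mem_univ z),
          ← Finset.add_sum_erase _ (fun i => a i • S' (Sum.inl i))
            (Finset.mem_univ z)]
        have e1 : ∀ i ∈ Finset.univ.erase z,
            (if i = z then ∑ i', a i' else a i) • s i = a i • s i := by
          intro i hi; rw [if_neg (Finset.ne_of_mem_erase hi)]
        have e2 : ∀ i ∈ Finset.univ.erase z,
            a i • S' (Sum.inl i) = a i • s i + a i • s z := by
          intro i hi
          rw [hS']
          simp only [Sum.elim_inl, if_neg (Finset.ne_of_mem_erase hi), smul_add]
        rw [Finset.sum_congr rfl e1, Finset.sum_congr rfl e2,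
          Finset.sum_add_distrib, if_pos rfl, ← Finset.sum_smul]
        have hz0 : a z • S' (Sum.inl z) = 0 := by rw [haz, zero_smul]
        rw [hz0, zero_add]
        have huniv : ∑ i', a i' = ∑ i ∈ Finset.univ.erase z, a i := by
          rw [← Finset.add_sum_erase _ a (Finset.mem_univ z), haz, zero_add]
        rw [huniv, add_comm]
      have hgr : ∀ x, g (Sum.inr x) • S' (Sum.inr x) = g (Sum.inr x) • t x :=
        fun x => by rw [hS']; rfl
      rw [Finset.sum_congr rfl (fun x _ => hgr x)] at hg
      rw [key]
      exact hg
    have hall := Fintype.linearIndependent_iff.mp hind h hsum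
    intro i
    cases i with
    | inl i =>
      by_cases hi : i = z
      · rw [hi]; exact h0
      · have := hall (Sum.inl i)
        simpa [hh, if_neg hi] using this
    | inr j => exact hall (Sum.inr j)
  -- isotropy
  have hm' : ∀ y ∈ Set.range S', sympl m y = 0 := by
    rintro y ⟨i, rfl⟩
    cases i with
    | inl i =>
      by_cases hi : i = z
      · rw [hS', hi]; simpa using sympl_self m
      · rw [hS']
        simp only [Sum.elim_inl, if_neg hi]
        rw [← symplL_apply, map_add, symplL_apply, symplL_apply, hms, hms]
        decide
    | inr j => rw [hS']; exact hmt j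
  have hgen : ∀ x ∈ Set.range S', ∀ y ∈ Set.range S', sympl x y = 0 := by
    intro x hx y hy
    by_cases hxm : x = m
    · subst hxm; exact hm' y hy
    · by_cases hym : y = m
      · subst hym; rw [sympl_comm]; exact hm' x hx
      · exact hiso x (hmem x hx hxm) y (hmem y hy hym)
  refine ⟨hindS', span_isotropic hgen, ?_, hmem⟩
  rw [finrank_span_eq_card hindS', finrank_span_eq_card hind]
end

section
/- Let U be a unitary on a Hilbert space, L_1, L_2 Pauli operators, and define L_1' = U L_1 U† L_1† and L_2' = L_2 L_1' L_2† L_1'†. If L_2' is a scalar multiple of the identity (±1), then L_1' commutes with L_2 up to sign; in particular, if for all Pauli logical operators L_2 the group commutator L_2' is ±I, then L_1' is a Pauli operator, and consequently U conjugates the Pauli L_1 into the Clifford group (U L_1 U† ∈ C^{(2)} applied to L_1, i.e., U ∈ C^{(3)} with respect to L_1 if L_1' ∈ C^{(2)}). -/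
/-- The Pauli operator `∏ⱼ Xⱼ^{aⱼ} Zⱼ^{bⱼ}` (up to phase) as a matrix on the
computational basis of `n` qubits: it sends `|y⟩ ↦ (-1)^{b·y} |y + a⟩`. -/
noncomputable def pauliOp {n : ℕ} (a b : Fin n → ZMod 2) :
    Matrix (Fin n → ZMod 2) (Fin n → ZMod 2) ℂ :=
  fun x y => if x = y + a then (-1 : ℂ) ^ ((∑ j, b j * y j).val) else 0

/-- Membership in the `n`-qubit Pauli group: a phase `±1, ±i` times some
`X^a Z^b`. -/
def IsPauli {n : ℕ} (M : Matrix (Fin n → ZMod 2) (Fin n → ZMod 2) ℂ) : Prop :=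
  ∃ (c : ℂ) (a b : Fin n → ZMod 2),
    (c = 1 ∨ c = -1 ∨ c = Complex.I ∨ c = -Complex.I) ∧ M = c • pauliOp a b

/-!
Since `L₁'` is unitary, `L₂ L₁' L₂† L₁'† = ±1` rearranges to `L₂ L₁' = ±L₁' L₂`.
If a matrix `M` commutes up to sign with every `Zⱼ`, its nonzero entries `M x y` all satisfy
`x = y + a` for one fixed `a`; if it also commutes up to the sign `(-1)^{bⱼ}` with every `Xⱼ`,
then the entries on this shifted diagonal are `M (y + a) y = (-1)^{b ⬝ᵥ y} M a 0`.
Hence `M = M a 0 • X^a Z^b`.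
-/

theorem exists_neg_one_pow_smul_of_eq_or_eq_neg {R M : Type*} [Ring R] [AddCommGroup M]
    [Module R M] {A B : M} (h : A = B ∨ A = -B) : ∃ ε : ZMod 2, A = (-1 : R) ^ ε.val • B := by
  rcases h with rfl | rfl
  · exact ⟨0, by rw [ZMod.val_zero, pow_zero, one_smul]⟩
  · exact ⟨1, by rw [ZMod.val_one, pow_one, neg_one_smul]⟩

theorem mul_eq_mul_mul_of_commutator_eq {G : Type*} [Monoid G] {L M L' M' C : G}
    (hM : M' * M = 1) (hL : L' * L = 1) (h : L * M * L' * M' = C) :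
    L * M = C * (M * L) := by
  rw [← h]
  simp only [mul_assoc]
  rw [← mul_assoc M' M L, hM, one_mul, hL, mul_one]

theorem neg_one_pow_zmod_two_val_add {R : Type*} [Ring R] (u v : ZMod 2) :
    (-1 : R) ^ (u + v).val = (-1) ^ u.val * (-1) ^ v.val := by
  rw [ZMod.val_add, ← neg_one_pow_eq_pow_mod_two, pow_add]

theorem neg_one_pow_zmod_two_val_injective :
    Function.Injective fun u : ZMod 2 => (-1 : ℂ) ^ u.val := by
  intro u v h
  fin_cases u <;> fin_cases v <;> first | rfl | norm_num [ZMod.val] at h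

section PauliMatrices

variable {n : ℕ}

local notation "Op" n => Matrix (Fin n → ZMod 2) (Fin n → ZMod 2) ℂ

theorem pauliOp_apply (a b x y : Fin n → ZMod 2) :
    pauliOp a b x y = if x = y + a then (-1 : ℂ) ^ (b ⬝ᵥ y).val else 0 := rfl

theorem pauliOp_mul_apply (a b : Fin n → ZMod 2) (M : Op n) (x y : Fin n → ZMod 2) :
    (pauliOp a b * M) x y = (-1 : ℂ) ^ (b ⬝ᵥ (x + a)).val * M (x + a) y := by
  rw [Matrix.mul_apply, Finset.sum_eq_single (x + a)]
  · rw [pauliOp_apply, if_pos (by rw [add_assoc, ZModModule.add_self, add_zero])]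
  · intro z _ hz
    rw [pauliOp_apply, if_neg (fun h => hz (by rw [h, add_assoc, ZModModule.add_self, add_zero])),
      zero_mul]
  · simp

theorem mul_pauliOp_apply (a b : Fin n → ZMod 2) (M : Op n) (x y : Fin n → ZMod 2) :
    (M * pauliOp a b) x y = M x (y + a) * (-1 : ℂ) ^ (b ⬝ᵥ y).val := by
  simp only [Matrix.mul_apply, pauliOp_apply, mul_ite, mul_zero, Finset.sum_ite_eq',
    Finset.mem_univ, if_true]

theorem star_pauliOp_mul_self (a b : Fin n → ZMod 2) : star (pauliOp a b) * pauliOp a b = 1 := by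
  ext x y
  rw [mul_pauliOp_apply, Matrix.star_apply, pauliOp_apply]
  by_cases hxy : x = y
  · subst hxy
    rw [if_pos rfl, Matrix.one_apply_eq, star_pow, star_neg, star_one, ← pow_add,
      Even.neg_one_pow ⟨_, rfl⟩]
  · rw [if_neg (by simpa [eq_comm] using hxy), star_zero, zero_mul, Matrix.one_apply_ne hxy]

theorem isPauli_pauliOp (a b : Fin n → ZMod 2) : IsPauli (pauliOp a b) :=
  ⟨1, a, b, Or.inl rfl, (one_smul ℂ _).symm⟩

theorem IsPauli.mem_unitaryGroup {P : Op n} (hP : IsPauli P) :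
    P ∈ Matrix.unitaryGroup (Fin n → ZMod 2) ℂ := by
  obtain ⟨c, a, b, hc, rfl⟩ := hP
  refine Unitary.smul_mem_of_mem ?_ (Matrix.mem_unitaryGroup_iff'.mpr (star_pauliOp_mul_self a b))
  rcases hc with rfl | rfl | rfl | rfl <;> simp [Unitary.mem_iff]

theorem exists_eq_add_of_pauliZ {M : Op n}
    (h : ∀ j, ∃ ε : ZMod 2, pauliOp 0 (Pi.single j 1) * M =
      (-1 : ℂ) ^ ε.val • (M * pauliOp 0 (Pi.single j 1))) :
    ∃ a, ∀ x y, M x y ≠ 0 → x = y + a := by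
  choose a ha using h
  refine ⟨a, fun x y hxy => funext fun j => neg_one_pow_zmod_two_val_injective ?_⟩
  show (-1 : ℂ) ^ (x j).val = (-1) ^ (y j + a j).val
  have hentry := congrFun₂ (ha j) x y
  simp only [pauliOp_mul_apply, mul_pauliOp_apply, Matrix.smul_apply, add_zero,
    single_dotProduct, one_mul, smul_eq_mul] at hentry
  rw [add_comm, neg_one_pow_zmod_two_val_add]
  exact mul_right_cancel₀ hxy (by rw [hentry]; ring)

theorem apply_add_eq_of_pauliX {M : Op n} {b : Fin n → ZMod 2}
    (h : ∀ j, pauliOp (Pi.single j 1) 0 * M =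
      (-1 : ℂ) ^ (b j).val • (M * pauliOp (Pi.single j 1) 0))
    (v x y : Fin n → ZMod 2) : M (x + v) y = (-1 : ℂ) ^ (b ⬝ᵥ v).val * M x (y + v) := by
  induction v using Pi.single_induction generalizing x y with
  | zero => simp
  | add v w hv hw =>
    rw [← add_assoc, hw, hv, dotProduct_add, neg_one_pow_zmod_two_val_add, add_assoc, add_comm w]
    ring
  | single j m =>
    obtain rfl | rfl : m = 0 ∨ m = 1 := by decide +revert
    · simp
    · have hentry := congrFun₂ (h j) x y
      simpa [pauliOp_mul_apply, mul_pauliOp_apply, dotProduct_single] using hentry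

theorem exists_eq_smul_pauliOp_of_commute_or_anticommute {M : Op n}
    (h : ∀ P, IsPauli P → P * M = M * P ∨ P * M = -(M * P)) :
    ∃ (c : ℂ) (a b : Fin n → ZMod 2), M = c • pauliOp a b := by
  have hsign (a b : Fin n → ZMod 2) : ∃ ε : ZMod 2,
      pauliOp a b * M = (-1 : ℂ) ^ ε.val • (M * pauliOp a b) :=
    exists_neg_one_pow_smul_of_eq_or_eq_neg (h _ (isPauli_pauliOp a b))
  obtain ⟨a, hsupp⟩ := exists_eq_add_of_pauliZ fun j => hsign 0 (Pi.single j 1)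
  choose b hb using fun j => hsign (Pi.single j 1) 0
  refine ⟨M a 0, a, b, Matrix.ext fun x y => ?_⟩
  rw [Matrix.smul_apply, pauliOp_apply, smul_eq_mul]
  split_ifs with hx
  · rw [hx, add_comm, apply_add_eq_of_pauliX hb, ZModModule.add_self, mul_comm]
  · rw [mul_zero]
    exact not_imp_comm.mp (hsupp x y) hx

end PauliMatrices

/-- base step of the Clifford-hierarchy recursion: let `U` be a
unitary, `L₁` a Pauli, and `L₁' = U L₁ U† L₁†`.  For any Pauli `L₂`, if the
group commutator `L₂' = L₂ L₁' L₂† L₁'†` is `±1`, then `L₁'` commutes with `L₂`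
up to that sign; and if the group commutator with *every* Pauli `L₂` is `±1`,
then `L₁'` is (a scalar multiple of) a Pauli operator — i.e. `U` conjugates the
Pauli `L₁` into the Clifford group. -/
theorem commutator_pauli_step {n : ℕ}
    (U L₁ L₁' : Matrix (Fin n → ZMod 2) (Fin n → ZMod 2) ℂ)
    (hU : U ∈ Matrix.unitaryGroup (Fin n → ZMod 2) ℂ)
    (hL₁ : IsPauli L₁)
    (hL₁' : L₁' = U * L₁ * star U * star L₁) :
    (∀ L₂, IsPauli L₂ →
      (L₂ * L₁' * star L₂ * star L₁' = 1 → L₂ * L₁' = L₁' * L₂) ∧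
      (L₂ * L₁' * star L₂ * star L₁' = -1 → L₂ * L₁' = -(L₁' * L₂))) ∧
    ((∀ L₂, IsPauli L₂ →
        L₂ * L₁' * star L₂ * star L₁' = 1 ∨
        L₂ * L₁' * star L₂ * star L₁' = -1) →
      ∃ (c : ℂ) (a b : Fin n → ZMod 2), L₁' = c • pauliOp a b) := by
  have hL₁'_unitary : L₁' ∈ Matrix.unitaryGroup (Fin n → ZMod 2) ℂ := hL₁' ▸
    mul_mem (mul_mem (mul_mem hU hL₁.mem_unitaryGroup) (Unitary.star_mem hU))
      (Unitary.star_mem hL₁.mem_unitaryGroup)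
  have hcomm (L₂ C) (hL₂ : IsPauli L₂) (h : L₂ * L₁' * star L₂ * star L₁' = C) :
      L₂ * L₁' = C * (L₁' * L₂) :=
    mul_eq_mul_mul_of_commutator_eq (Unitary.star_mul_self_of_mem hL₁'_unitary)
      (Unitary.star_mul_self_of_mem hL₂.mem_unitaryGroup) h
  have hsign (L₂) (hL₂ : IsPauli L₂) :
      (L₂ * L₁' * star L₂ * star L₁' = 1 → L₂ * L₁' = L₁' * L₂) ∧
      (L₂ * L₁' * star L₂ * star L₁' = -1 → L₂ * L₁' = -(L₁' * L₂)) :=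
    ⟨fun h => by simpa using hcomm L₂ 1 hL₂ h, fun h => by simpa using hcomm L₂ (-1) hL₂ h⟩
  refine ⟨hsign, fun h => exists_eq_smul_pauliOp_of_commute_or_anticommute fun L₂ hL₂ => ?_⟩
  exact (h L₂ hL₂).imp (hsign L₂ hL₂).1 (hsign L₂ hL₂).2
end

section
/- Let S_0 be an isotropic subspace of F_2^{2n} and suppose a sequence of measurements is applied, maintaining sets C (evolved stabilizers with associated original stabilizers) and V (accumulated measurements) via the distance-algorithm update rules. Then at every time step, for every c ∈ C with associated stabilizer s_c ∈ ⟨S_0⟩, the product c·s_c lies in the group generated by the measurements performed so far; equivalently, c + s_c ∈ span(V ∪ all measurement vectors) in F_2^{2n}, so the outcome of c·s_c is determined by recorded measurement outcomes. -/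
/-- The state of the distance algorithm: `C` is the list of evolved stabilizer
generators, each paired with its associated original stabilizer; `V` is the list
of accumulated (updated) measurement operators; `meas` records all measurement
operators performed so far. -/
structure AlgState (n : ℕ) where
  C : List (PauliVec n × PauliVec n)
  V : List (PauliVec n)
  meas : List (PauliVec n)

/-- Initial state of the distance algorithm: `C = S₀` (each generator associated
with itself), `V` empty, no measurements yet. -/
def initState {n : ℕ} (S₀ : List (PauliVec n)) : AlgState n :=
  ⟨S₀.map fun s => (s, s), [], []⟩

/-- One step of the distance algorithm, processing the measurement `m` according
to cases 1–4 (depending on which elements of `C` and `V` anticommute with `m`). -/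
inductive Step {n : ℕ} : AlgState n → PauliVec n → AlgState n → Prop
  | case1 (σ : AlgState n) (m : PauliVec n)
      (hC : ∀ cs ∈ σ.C, sympl cs.1 m = 0) (hV : ∀ v ∈ σ.V, sympl v m = 0) :
      Step σ m ⟨σ.C, σ.V ++ [m], σ.meas ++ [m]⟩
  | case2 (σ : AlgState n) (m : PauliVec n) (cj : PauliVec n × PauliVec n)
      (hcj : cj ∈ σ.C) (hanti : sympl cj.1 m = 1)
      (hV : ∀ v ∈ σ.V, sympl v m = 0) :
      Step σ m ⟨(σ.C.erase cj).map fun cs =>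
          if sympl cs.1 m = 1 then (cs.1 + cj.1, cs.2 + cj.2) else cs,
        σ.V ++ [m], σ.meas ++ [m]⟩
  | case3 (σ : AlgState n) (m : PauliVec n) (mj : PauliVec n)
      (hmj : mj ∈ σ.V) (hanti : sympl mj m = 1)
      (hC : ∀ cs ∈ σ.C, sympl cs.1 m = 0) :
      Step σ m ⟨σ.C,
        ((σ.V.erase mj).map fun v => if sympl v m = 1 then v + mj else v) ++ [m],
        σ.meas ++ [m]⟩
  | case4 (σ : AlgState n) (m : PauliVec n) (mj : PauliVec n)
      (hmj : mj ∈ σ.V) (hanti : sympl mj m = 1)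
      (cj : PauliVec n × PauliVec n) (hcj : cj ∈ σ.C) (hcanti : sympl cj.1 m = 1) :
      Step σ m ⟨σ.C.map fun cs =>
          if sympl cs.1 m = 1 then (cs.1 + mj, cs.2) else cs,
        ((σ.V.erase mj).map fun v => if sympl v m = 1 then v + mj else v) ++ [m],
        σ.meas ++ [m]⟩

/-- Running the distance algorithm on a list of measurements. -/
inductive RunList {n : ℕ} : AlgState n → List (PauliVec n) → AlgState n → Prop
  | nil (σ : AlgState n) : RunList σ [] σ
  | cons {σ σ' σ'' : AlgState n} {m : PauliVec n} {ms : List (PauliVec n)} :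
      Step σ m σ' → RunList σ' ms σ'' → RunList σ (m :: ms) σ''

open Submodule in
/-- The `F₂`-span of a list of Pauli vectors. -/
def listSpan {n : ℕ} (L : List (PauliVec n)) : Submodule (ZMod 2) (PauliVec n) :=
  span (ZMod 2) {v | v ∈ L}

/-!
Each update replaces an element of `C` or `V` by its sum with an element of `C` or `V`, and the
span of the recorded measurements only grows. So `c + s_c ∈ span(meas)` survives every step once
it is strengthened by `V ⊆ span(meas)`; initially `c + s_c = s + s = 0`.
-/

lemma List.forall_mem_map_ite {α : Type*} {P : α → Prop} {p : α → Prop} [DecidablePred p]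
    {g : α → α} {L : List α} (hL : ∀ x ∈ L, P x) (hg : ∀ x, P x → P (g x)) :
    ∀ x ∈ L.map (fun x => if p x then g x else x), P x :=
  List.forall_mem_map.2 fun x hx => by
    split_ifs
    · exact hg x (hL x hx)
    · exact hL x hx

lemma listSpan_mono {n : ℕ} {L L' : List (PauliVec n)} (h : L ⊆ L') :
    listSpan L ≤ listSpan L' :=
  Submodule.span_mono h

lemma mem_listSpan_of_mem {n : ℕ} {L : List (PauliVec n)} {v : PauliVec n} (hv : v ∈ L) :
    v ∈ listSpan L :=
  Submodule.subset_span hv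

namespace AlgState

variable {n : ℕ}

def SpannedByMeas (σ : AlgState n) : Prop :=
  (∀ cs ∈ σ.C, cs.1 + cs.2 ∈ listSpan σ.meas) ∧ ∀ v ∈ σ.V, v ∈ listSpan σ.meas

lemma spannedByMeas_initState (S₀ : List (PauliVec n)) : (initState S₀).SpannedByMeas := by
  refine ⟨List.forall_mem_map.2 fun s _ => ?_, fun v hv => absurd hv List.not_mem_nil⟩
  rw [ZModModule.add_self]
  exact zero_mem _

lemma SpannedByMeas.step {σ σ' : AlgState n} {m : PauliVec n} (hinv : σ.SpannedByMeas)
    (hstep : Step σ m σ') : σ'.SpannedByMeas := by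
  obtain ⟨hC, hV⟩ := hinv
  set W := listSpan (σ.meas ++ [m])
  have hle : listSpan σ.meas ≤ W := listSpan_mono (List.subset_append_left _ _)
  have hCW : ∀ cs ∈ σ.C, cs.1 + cs.2 ∈ W := fun cs hcs => hle (hC cs hcs)
  have hVW : ∀ v ∈ σ.V, v ∈ W := fun v hv => hle (hV v hv)
  have hm : m ∈ W := mem_listSpan_of_mem List.mem_concat_self
  have hVm : ∀ v ∈ σ.V ++ [m], v ∈ W :=
    List.forall_mem_append.2 ⟨hVW, List.forall_mem_singleton.2 hm⟩
  have hV_update : ∀ mj ∈ σ.V, ∀ v ∈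
      ((σ.V.erase mj).map fun v => if sympl v m = 1 then v + mj else v) ++ [m], v ∈ W :=
    fun mj hmj => List.forall_mem_append.2
      ⟨List.forall_mem_map_ite (fun v hv => hVW v (List.mem_of_mem_erase hv))
        (fun v hv => add_mem hv (hVW mj hmj)), List.forall_mem_singleton.2 hm⟩
  cases hstep with
  | case1 => exact ⟨hCW, hVm⟩
  | case2 cj hcj =>
    refine ⟨List.forall_mem_map_ite (fun cs hcs => hCW cs (List.mem_of_mem_erase hcs))
      (fun cs hcs => ?_), hVm⟩
    rw [add_add_add_comm]
    exact add_mem hcs (hCW cj hcj)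
  | case3 mj hmj => exact ⟨hCW, hV_update mj hmj⟩
  | case4 mj hmj =>
    refine ⟨List.forall_mem_map_ite hCW (fun cs hcs => ?_), hV_update mj hmj⟩
    rw [add_right_comm]
    exact add_mem hcs (hVW mj hmj)

lemma SpannedByMeas.run {σ σ' : AlgState n} {ms : List (PauliVec n)} (hinv : σ.SpannedByMeas)
    (hrun : RunList σ ms σ') : σ'.SpannedByMeas := by
  induction hrun with
  | nil => exact hinv
  | cons hstep _ ih => exact ih (hinv.step hstep)

end AlgState

theorem distance_algorithm_invariant_general {n : ℕ} (S₀ : List (PauliVec n))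
    (ms : List (PauliVec n)) (σ : AlgState n)
    (hrun : RunList (initState S₀) ms σ) :
    ∀ cs ∈ σ.C, cs.1 + cs.2 ∈ listSpan σ.meas :=
  ((AlgState.spannedByMeas_initState S₀).run hrun).1

/-- distance-algorithm invariant: starting from an isotropic
stabilizer group `S₀`, after processing any sequence of measurements, every
`c ∈ C` with associated stabilizer `s_c` satisfies `c + s_c ∈ span(meas)`:
the outcome of `c·s_c` is determined by the recorded measurement outcomes. -/
theorem distance_algorithm_invariant {n : ℕ} (S₀ : List (PauliVec n))
    (hiso : ∀ x ∈ listSpan S₀, ∀ y ∈ listSpan S₀, sympl x y = 0)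
    (ms : List (PauliVec n)) (σ : AlgState n)
    (hrun : RunList (initState S₀) ms σ) :
    ∀ cs ∈ σ.C, cs.1 + cs.2 ∈ listSpan σ.meas :=
  distance_algorithm_invariant_general S₀ ms σ hrun
end

section
/- If a stabilizer s_u ∈ ⟨S_0⟩ is unmasked at some intermediate point of the measurement sequence (i.e., some u ∈ span(C) ∩ span(V) has associated stabilizer s_u), then after any further measurements processed by the distance-algorithm update rules, there still exists u' ∈ span(C) ∩ span(V) with associated stabilizer s_u (or the reconstruction succeeds via an identity element in C). Hence computing span(C) ∩ span(V) once at the end of the sequence recovers all unmasked stabilizers. -/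
/-!
All four update rules act on `C` and on `V` by linear maps `x ↦ x + ⟨x, m⟩ a` (where `a` is the
removed pivot, which the map sends to `0`), so the image of `span V` lies in the new `span V`.
For an unmasked `u = ∑ sub`: in Cases 1 and 3 `u` commutes with `m` (in Case 3 because all of `C`
does) and nothing changes; in Case 2 all of `V` commutes with `m`, so `⟨u, m⟩ = 0` and the updated
`sub` without the pivot `c_j` has the same sum, associated stabilizer included; in Case 4 the
updated `sub` sums to `u + ⟨u, m⟩ m_j` in both `C` and `V`, with its associated stabilizer unchanged.
-/

open Submodule

section ConditionalShift

variable {M : Type*} [AddCommGroup M] [Module (ZMod 2) M]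

def shiftBy (φ : M →ₗ[ZMod 2] ZMod 2) (a : M) : M →ₗ[ZMod 2] M :=
  LinearMap.id + φ.smulRight a

variable (φ : M →ₗ[ZMod 2] ZMod 2) (a : M)

theorem shiftBy_apply (x : M) : shiftBy φ a x = x + φ x • a := rfl

theorem ite_eq_shiftBy (x : M) : (if φ x = 1 then x + a else x) = shiftBy φ a x := by
  rcases (by decide : ∀ c : ZMod 2, c = 0 ∨ c = 1) (φ x) with h | h <;> simp [shiftBy_apply, h]

theorem shiftBy_of_eq_zero {x : M} (hx : φ x = 0) : shiftBy φ a x = x := by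
  simp [shiftBy_apply, hx]

theorem shiftBy_self (ha : φ a = 1) : shiftBy φ a a = 0 := by
  simp [shiftBy_apply, ha, ZModModule.add_self]

theorem span_le_comap_shiftBy [BEq M] [LawfulBEq M] {V : List M} (ha : φ a = 1) :
    span (ZMod 2) {v | v ∈ V} ≤
      (span (ZMod 2) {v | v ∈ (V.erase a).map (shiftBy φ a)}).comap (shiftBy φ a) := by
  refine span_le.mpr fun v hv => ?_
  by_cases hva : v = a
  · simp [hva, shiftBy_self φ a ha]
  · exact subset_span (List.mem_map_of_mem ((List.mem_erase_of_ne hva).mpr hv))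

end ConditionalShift

theorem List.sum_map_fst_eq {M N : Type*} [AddMonoid M] [AddMonoid N] (l : List (M × N)) :
    (l.map Prod.fst).sum = l.sum.1 :=
  (map_list_sum (AddMonoidHom.fst M N) l).symm

theorem List.sum_map_snd_eq {M N : Type*} [AddMonoid M] [AddMonoid N] (l : List (M × N)) :
    (l.map Prod.snd).sum = l.sum.2 :=
  (map_list_sum (AddMonoidHom.snd M N) l).symm

variable {n : ℕ}

def symplLeft (m : PauliVec n) : PauliVec n →ₗ[ZMod 2] ZMod 2 where
  toFun v := sympl v m
  map_add' u v := by
    simp only [sympl, Prod.fst_add, Prod.snd_add, Pi.add_apply, ← Finset.sum_add_distrib]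
    exact Finset.sum_congr rfl fun i _ => by ring
  map_smul' c v := by
    simp only [sympl, Prod.smul_fst, Prod.smul_snd, Pi.smul_apply, smul_eq_mul,
      RingHom.id_apply, Finset.mul_sum]
    exact Finset.sum_congr rfl fun i _ => by ring

theorem sympl_eq_zero_of_mem_listSpan {V : List (PauliVec n)} {m u : PauliVec n}
    (hV : ∀ v ∈ V, sympl v m = 0) (hu : u ∈ listSpan V) : sympl u m = 0 :=
  (span_le (p := LinearMap.ker (symplLeft m))).mpr hV hu

theorem listSpan_le_append (V W : List (PauliVec n)) : listSpan V ≤ listSpan (V ++ W) :=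
  span_mono fun _ hv => List.mem_append_left W hv

def symplFst (m : PauliVec n) : PauliVec n × PauliVec n →ₗ[ZMod 2] ZMod 2 :=
  (symplLeft m).comp (LinearMap.fst (ZMod 2) (PauliVec n) (PauliVec n))

theorem shiftBy_mem_listSpan_update {V : List (PauliVec n)} {m mj u : PauliVec n}
    (hanti : sympl mj m = 1) (hu : u ∈ listSpan V) :
    shiftBy (symplLeft m) mj u ∈
      listSpan (((V.erase mj).map fun v => if sympl v m = 1 then v + mj else v) ++ [m]) := by
  have hf : (fun v => if sympl v m = 1 then v + mj else v) = shiftBy (symplLeft m) mj :=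
    funext (ite_eq_shiftBy (symplLeft m) mj)
  rw [hf]
  exact listSpan_le_append _ _ (span_le_comap_shiftBy (symplLeft m) mj hanti hu)

/-- The paper's "`s` is unmasked": some `u = ∑ sub` over a subcollection of `C` lies in
`span(V)` and has associated stabilizer `s`. -/
def IsUnmasked (σ : AlgState n) (s : PauliVec n) : Prop :=
  ∃ sub : List (PauliVec n × PauliVec n),
    sub.Sublist σ.C ∧ sub.sum.1 ∈ listSpan σ.V ∧ sub.sum.2 = s

theorem IsUnmasked.step {σ σ' : AlgState n} {m s : PauliVec n} (h : IsUnmasked σ s)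
    (hs : Step σ m σ') : IsUnmasked σ' s := by
  obtain ⟨sub, hsub, huV, hus⟩ := h
  cases hs with
  | case1 => exact ⟨sub, hsub, listSpan_le_append _ _ huV, hus⟩
  | case2 cj _ hanti hV =>
    set T := shiftBy (symplFst m) cj
    have hT : (fun cs : PauliVec n × PauliVec n =>
        if sympl cs.1 m = 1 then (cs.1 + cj.1, cs.2 + cj.2) else cs) = T :=
      funext (ite_eq_shiftBy (symplFst m) cj)
    have hu0 : symplFst m sub.sum = 0 := sympl_eq_zero_of_mem_listSpan hV huV
    have hsum : T (sub.erase cj).sum = sub.sum := by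
      by_cases hmem : cj ∈ sub
      · calc T (sub.erase cj).sum = T (cj :: sub.erase cj).sum := by
              rw [List.sum_cons, map_add, shiftBy_self _ _ hanti, zero_add]
          _ = sub.sum := by
              rw [← (List.perm_cons_erase hmem).sum_eq, shiftBy_of_eq_zero _ _ hu0]
      · rw [List.erase_of_not_mem hmem, shiftBy_of_eq_zero _ _ hu0]
    refine ⟨(sub.erase cj).map T, hT ▸ (hsub.erase cj).map T, ?_, ?_⟩ <;>
      rw [← map_list_sum, hsum]
    exacts [listSpan_le_append _ _ huV, hus]
  | case3 mj _ hanti hC =>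
    have hu0 : symplLeft m sub.sum.1 = 0 :=
      list_sum_mem (S := LinearMap.ker (symplFst m)) fun cs hcs => hC cs (hsub.subset hcs)
    refine ⟨sub, hsub, ?_, hus⟩
    simpa only [shiftBy_of_eq_zero _ _ hu0] using shiftBy_mem_listSpan_update hanti huV
  | case4 mj _ hanti =>
    set T := shiftBy (symplFst m) (mj, 0)
    have hT : (fun cs : PauliVec n × PauliVec n =>
        if sympl cs.1 m = 1 then (cs.1 + mj, cs.2) else cs) = T :=
      funext fun cs => by
        rw [← ite_eq_shiftBy]; exact if_congr Iff.rfl (Prod.ext rfl (add_zero _).symm) rfl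
    refine ⟨sub.map T, hT ▸ hsub.map T, ?_, ?_⟩ <;> rw [← map_list_sum]
    · exact shiftBy_mem_listSpan_update hanti huV
    · simpa [T, shiftBy_apply] using hus

theorem IsUnmasked.runList {σ σ' : AlgState n} {ms : List (PauliVec n)} {s : PauliVec n}
    (h : IsUnmasked σ s) (hrun : RunList σ ms σ') : IsUnmasked σ' s := by
  induction hrun with
  | nil => exact h
  | cons hstep _ ih => exact ih (h.step hstep)

theorem unmasked_persists_general {n : ℕ}
    (σ : AlgState n)
    (s_u : PauliVec n)
    (sub : List (PauliVec n × PauliVec n)) (hsub : sub.Sublist σ.C)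
    (huV : (sub.map Prod.fst).sum ∈ listSpan σ.V)
    (hassoc : (sub.map Prod.snd).sum = s_u)
    (ms' : List (PauliVec n)) (σ' : AlgState n)
    (hrun' : RunList σ ms' σ') :
    ∃ sub' : List (PauliVec n × PauliVec n),
      sub'.Sublist σ'.C ∧
      (sub'.map Prod.fst).sum ∈ listSpan σ'.V ∧
      (sub'.map Prod.snd).sum = s_u := by
  simp only [List.sum_map_fst_eq, List.sum_map_snd_eq] at huV hassoc ⊢
  exact IsUnmasked.runList ⟨sub, hsub, huV, hassoc⟩ hrun'

/-- if a stabilizer `s_u ∈ ⟨S₀⟩` is unmasked at some intermediate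
point of the measurement sequence (some `u ∈ span(C) ∩ span(V)`, given by a
subcollection of `C`, has associated stabilizer `s_u`), then after any further
measurements there is still an element of `span(C) ∩ span(V)` with associated
stabilizer `s_u`.  Hence computing `span(C) ∩ span(V)` once at the end of the
sequence recovers all unmasked stabilizers. -/
theorem unmasked_persists {n : ℕ} (S₀ : List (PauliVec n))
    (hiso : ∀ x ∈ listSpan S₀, ∀ y ∈ listSpan S₀, sympl x y = 0)
    (ms : List (PauliVec n)) (σ : AlgState n)
    (hrun : RunList (initState S₀) ms σ)
    (s_u : PauliVec n)
    (sub : List (PauliVec n × PauliVec n)) (hsub : sub.Sublist σ.C)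
    (huV : (sub.map Prod.fst).sum ∈ listSpan σ.V)
    (hassoc : (sub.map Prod.snd).sum = s_u)
    (ms' : List (PauliVec n)) (σ' : AlgState n)
    (hrun' : RunList σ ms' σ') :
    ∃ sub' : List (PauliVec n × PauliVec n),
      sub'.Sublist σ'.C ∧
      (sub'.map Prod.fst).sum ∈ listSpan σ'.V ∧
      (sub'.map Prod.snd).sum = s_u :=
  unmasked_persists_general σ s_u sub hsub huV hassoc ms' σ' hrun'
end
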